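/- Let A be an n×n positive semidefinite complex matrix with eigenvalues a_1 ≥ ... ≥ a_n and orthonormal eigenvectors v_1,...,v_n, and let K be a nonzero n×n complex matrix. Then the limit of the largest eigenvalue λ_1((K A^p K*)^{1/p}) as p → ∞ equals a_{l_1}, where l_1 is the smallest index i with K v_i ≠ 0. -/

import Mathlib

/-!
Put `P i = (K vᵢ)(K vᵢ)ᴴ`. Expanding `Aᵖ` in the eigenbasis gives `K Aᵖ Kᴴ = ∑ aᵢᵖ • P i`, and
`P i = 0` for `i < l₁`, so in the Loewner order `a_{l₁}ᵖ • P l₁ ≤ K Aᵖ Kᴴ ≤ a_{l₁}ᵖ • K Kᴴ`.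
The largest eigenvalue is monotone for the Loewner order and commutes with monotone functional
calculus, hence `λ₁((K Aᵖ Kᴴ)^{1/p}) = λ₁(K Aᵖ Kᴴ)^{1/p}` lies between `c₁^{1/p} a_{l₁}`
and `c₂^{1/p} a_{l₁}` with `c₁ = λ₁(P l₁) > 0` and `c₂ = λ₁(K Kᴴ) > 0`; both bounds tend to
`a_{l₁}`.
-/

open Matrix Filter ComplexOrder

noncomputable def hfun {n : ℕ} (f : ℝ → ℂ) (A : Matrix (Fin n) (Fin n) ℂ) :
    Matrix (Fin n) (Fin n) ℂ :=
  if hA : A.IsHermitian then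
    (hA.eigenvectorUnitary : Matrix (Fin n) (Fin n) ℂ) *
      Matrix.diagonal (fun i => f (hA.eigenvalues i)) *
      star (hA.eigenvectorUnitary : Matrix (Fin n) (Fin n) ℂ)
  else 0

noncomputable def mrpow {n : ℕ} (A : Matrix (Fin n) (Fin n) ℂ) (p : ℝ) :
    Matrix (Fin n) (Fin n) ℂ :=
  hfun (fun t => ((t ^ p : ℝ) : ℂ)) A

noncomputable def eigsDesc {n : ℕ} (A : Matrix (Fin n) (Fin n) ℂ) : List ℝ :=
  if hA : A.IsHermitian then (List.ofFn hA.eigenvalues).mergeSort (fun a b => b ≤ a) else []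

noncomputable def lam {n : ℕ} (A : Matrix (Fin n) (Fin n) ℂ) (k : ℕ) : ℝ :=
  (eigsDesc A).getD k 0

noncomputable def ranM {n : ℕ} (A : Matrix (Fin n) (Fin n) ℂ) :
    Submodule ℂ (EuclideanSpace ℂ (Fin n)) :=
  LinearMap.range (Matrix.toEuclideanLin A)

noncomputable def projOnto {n : ℕ} (U : Submodule ℂ (EuclideanSpace ℂ (Fin n))) :
    Matrix (Fin n) (Fin n) ℂ :=
  LinearMap.toMatrix (EuclideanSpace.basisFun (Fin n) ℂ).toBasis
    (EuclideanSpace.basisFun (Fin n) ℂ).toBasis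
    (U.subtype.comp (U.orthogonalProjectionOnto).toLinearMap)

open scoped MatrixOrder Topology

theorem List.isGreatest_getD_zero_of_pairwise {α : Type*} [Preorder α] {l : List α}
    (hl : l.Pairwise (· ≥ ·)) (hne : l ≠ []) (d : α) : IsGreatest {x | x ∈ l} (l.getD 0 d) := by
  obtain ⟨x, t, rfl⟩ := List.exists_cons_of_ne_nil hne
  exact ⟨List.mem_cons_self, by simpa [upperBounds] using (List.pairwise_cons.mp hl).1⟩

theorem tendsto_rpow_inv_of_le_of_le {g : ℝ → ℝ} {a c₁ c₂ : ℝ} (ha : 0 ≤ a) (hc₁ : 0 < c₁)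
    (hc₂ : 0 < c₂) (hg : ∀ p : ℝ, 0 < p → a ^ p * c₁ ≤ g p ∧ g p ≤ a ^ p * c₂) :
    Tendsto (fun p => g p ^ p⁻¹) atTop (𝓝 a) := by
  have hroot : ∀ c > 0, ∀ p : ℝ, 0 < p → (a ^ p * c) ^ p⁻¹ = c ^ p⁻¹ * a := fun c hc p hp => by
    rw [Real.mul_rpow (by positivity) hc.le, ← Real.rpow_mul ha, mul_inv_cancel₀ hp.ne',
      Real.rpow_one, mul_comm]
  have hlim : ∀ c > 0, Tendsto (fun p : ℝ => c ^ p⁻¹ * a) atTop (𝓝 a) := fun c hc => by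
    simpa using ((Real.continuousAt_const_rpow hc.ne').tendsto.comp
      tendsto_inv_atTop_zero).mul_const a
  refine tendsto_of_tendsto_of_tendsto_of_le_of_le' (hlim c₁ hc₁) (hlim c₂ hc₂) ?_ ?_
  all_goals filter_upwards [eventually_gt_atTop 0] with p hp
  · rw [← hroot c₁ hc₁ p hp]
    exact Real.rpow_le_rpow (by positivity) (hg p hp).1 (by positivity)
  · rw [← hroot c₂ hc₂ p hp]
    exact Real.rpow_le_rpow ((by positivity : 0 ≤ a ^ p * c₁).trans (hg p hp).1) (hg p hp).2
      (by positivity)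

namespace Matrix

section Eigenvectors

variable {m 𝕜 : Type*} [Fintype m] [DecidableEq m] [RCLike 𝕜]

theorem diagonal_comp_mulVec_of_mulVec_eq_smul {d : m → ℝ} (g : ℝ → ℝ) {c : m → 𝕜} {μ : ℝ}
    (hc : diagonal (RCLike.ofReal ∘ d) *ᵥ c = μ • c) :
    diagonal (RCLike.ofReal ∘ g ∘ d) *ᵥ c = g μ • c := by
  ext j
  have hj := congrFun hc j
  simp only [mulVec_diagonal, Function.comp_apply, Pi.smul_apply,
    RCLike.real_smul_eq_coe_mul] at hj ⊢
  rcases eq_or_ne (c j) 0 with h | h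
  · simp [h]
  · rw [mul_right_cancel₀ h hj |> RCLike.ofReal_injective]

theorem IsHermitian.cfc_mulVec_of_mulVec_eq_smul {C : Matrix m m 𝕜} (hC : C.IsHermitian)
    (f : ℝ → ℝ) {w : m → 𝕜} {μ : ℝ} (hw : C *ᵥ w = μ • w) : cfc f C *ᵥ w = f μ • w := by
  set U : Matrix m m 𝕜 := (hC.eigenvectorUnitary : Matrix m m 𝕜)
  have hUU : U * star U = 1 := Unitary.mul_star_self_of_mem hC.eigenvectorUnitary.2
  have hUU' : star U * U = 1 := Unitary.star_mul_self_of_mem hC.eigenvectorUnitary.2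
  have hD : diagonal (RCLike.ofReal ∘ hC.eigenvalues) *ᵥ (star U *ᵥ w) = μ • (star U *ᵥ w) := by
    have hC' := hC.spectral_theorem
    rw [Unitary.conjStarAlgAut_apply] at hC'
    rw [← mulVec_smul, ← hw, mulVec_mulVec, mulVec_mulVec]
    conv_rhs => rw [hC']
    simp only [U, ← mul_assoc, hUU', one_mul]
  rw [hC.cfc_eq, IsHermitian.cfc, Unitary.conjStarAlgAut_apply, ← mulVec_mulVec, ← mulVec_mulVec,
    diagonal_comp_mulVec_of_mulVec_eq_smul f hD, mulVec_smul, mulVec_mulVec, hUU, one_mulVec]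

theorem sum_vecMulVec_star_eq_one {v : m → m → 𝕜}
    (hv : ∀ i j, star (v i) ⬝ᵥ v j = if i = j then 1 else 0) :
    ∑ i, vecMulVec (v i) (star (v i)) = 1 := by
  set V : Matrix m m 𝕜 := of fun i j => v j i
  have hVV : Vᴴ * V = 1 := by
    ext i j
    simpa [V, mul_apply, dotProduct, one_apply] using hv i j
  have hVV' : V * Vᴴ = 1 := mul_eq_one_comm.mp hVV
  ext j k
  simpa [V, mul_apply, vecMulVec_apply, Matrix.sum_apply] using congrFun (congrFun hVV' j) k

theorem eq_sum_vecMulVec_mulVec {v : m → m → 𝕜} (hv : ∑ i, vecMulVec (v i) (star (v i)) = 1)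
    (M : Matrix m m 𝕜) : M = ∑ i, vecMulVec (M *ᵥ v i) (star (v i)) := by
  conv_lhs => rw [← mul_one M, ← hv, Finset.mul_sum]
  simp only [mul_vecMulVec]

theorem mulVec_eq_smul_of_eq_sum {v : m → m → 𝕜}
    (hv : ∀ i j, star (v i) ⬝ᵥ v j = if i = j then 1 else 0) {a : m → ℝ}
    {A : Matrix m m 𝕜} (hA : A = ∑ i, (a i : 𝕜) • vecMulVec (v i) (star (v i))) (j : m) :
    A *ᵥ v j = a j • v j := by
  rw [hA, sum_mulVec, Finset.sum_eq_single j]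
  · rw [smul_mulVec, vecMulVec_mulVec, hv, if_pos rfl, MulOpposite.op_one, one_smul,
      RCLike.real_smul_eq_coe_smul (K := 𝕜)]
  · intro i _ hij
    rw [smul_mulVec, vecMulVec_mulVec, hv, if_neg hij, MulOpposite.op_zero, zero_smul, smul_zero]
  · simp

omit [DecidableEq m] in
theorem PosSemidef.nonneg_of_mulVec_eq_smul {A : Matrix m m 𝕜} (hA : A.PosSemidef)
    {x : m → 𝕜} (hx : star x ⬝ᵥ x = 1) {μ : ℝ} (hAx : A *ᵥ x = μ • x) : 0 ≤ μ := by
  have h := hA.dotProduct_mulVec_nonneg x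
  rwa [hAx, dotProduct_smul, hx, RCLike.real_smul_eq_coe_smul (K := 𝕜), smul_eq_mul, mul_one,
    RCLike.ofReal_nonneg] at h

omit [DecidableEq m] in
theorem mul_vecMulVec_star_mul_conjTranspose (K : Matrix m m 𝕜) (x y : m → 𝕜) :
    K * vecMulVec x (star y) * Kᴴ = vecMulVec (K *ᵥ x) (star (K *ᵥ y)) := by
  rw [mul_vecMulVec, vecMulVec_mul, star_mulVec]

theorem self_mul_conjTranspose_eq_sum {v : m → m → 𝕜}
    (hv : ∑ i, vecMulVec (v i) (star (v i)) = 1) (K : Matrix m m 𝕜) :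
    K * Kᴴ = ∑ i, vecMulVec (K *ᵥ v i) (star (K *ᵥ v i)) := by
  nth_rw 1 [← mul_one K]
  rw [← hv, Finset.mul_sum, Finset.sum_mul]
  simp only [mul_vecMulVec_star_mul_conjTranspose]

theorem IsHermitian.mul_cfc_mul_conjTranspose_eq_sum {v : m → m → 𝕜}
    (hv : ∑ i, vecMulVec (v i) (star (v i)) = 1) {A : Matrix m m 𝕜} (hA : A.IsHermitian)
    {a : m → ℝ} (hAv : ∀ i, A *ᵥ v i = a i • v i) (f : ℝ → ℝ) (K : Matrix m m 𝕜) :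
    K * cfc f A * Kᴴ = ∑ i, f (a i) • vecMulVec (K *ᵥ v i) (star (K *ᵥ v i)) := by
  rw [eq_sum_vecMulVec_mulVec hv (cfc f A), Finset.mul_sum, Finset.sum_mul]
  refine Finset.sum_congr rfl fun i _ => ?_
  rw [hA.cfc_mulVec_of_mulVec_eq_smul f (hAv i), smul_vecMulVec, mul_smul_comm, smul_mul_assoc,
    mul_vecMulVec_star_mul_conjTranspose]

omit [Fintype m] [DecidableEq m] in
theorem vecMulVec_star_ne_zero {x : m → 𝕜} (hx : x ≠ 0) : vecMulVec x (star x) ≠ 0 := by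
  obtain ⟨j, hj⟩ := Function.ne_iff.mp hx
  intro h
  have := congrFun (congrFun h j) j
  simp only [vecMulVec_apply, Pi.star_apply, zero_apply, mul_eq_zero, star_eq_zero,
    or_self] at this
  exact hj this

omit [Fintype m] [DecidableEq m] in
theorem PosSemidef.smul_le_smul_of_le {X : Matrix m m 𝕜} (hX : X.PosSemidef) {s t : ℝ}
    (hst : s ≤ t) : s • X ≤ t • X :=
  le_iff.mpr (by rw [← sub_smul]; exact hX.smul (sub_nonneg.mpr hst))

end Eigenvectors

section LargestEigenvalue

variable {n : ℕ}

theorem mrpow_eq_cfc {A : Matrix (Fin n) (Fin n) ℂ} (hA : A.IsHermitian) (p : ℝ) :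
    mrpow A p = cfc (fun t : ℝ => t ^ p) A := by
  rw [mrpow, hfun, dif_pos hA, hA.cfc_eq, IsHermitian.cfc, Unitary.conjStarAlgAut_apply]
  rfl

variable [NeZero n] {C D : Matrix (Fin n) (Fin n) ℂ}

theorem IsHermitian.isGreatest_spectrum_lam (hC : C.IsHermitian) :
    IsGreatest (spectrum ℝ C) (lam C 0) := by
  have hsort := List.pairwise_mergeSort (le := fun a b : ℝ => decide (b ≤ a))
    (fun a b c hab hbc => by simp only [decide_eq_true_eq] at *; exact hbc.trans hab)
    (fun a b => by simpa using le_total b a) (List.ofFn hC.eigenvalues)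
  have hne : (List.ofFn hC.eigenvalues).mergeSort (fun a b => b ≤ a) ≠ [] := by
    simp [← List.length_pos_iff, NeZero.pos n]
  have h := List.isGreatest_getD_zero_of_pairwise (by simpa using hsort) hne 0
  have hspec : spectrum ℝ C =
      {x | x ∈ (List.ofFn hC.eigenvalues).mergeSort (fun a b => b ≤ a)} := by
    ext x
    simp [hC.spectrum_real_eq_range_eigenvalues]
  rwa [hspec, lam, eigsDesc, dif_pos hC]

theorem IsHermitian.le_algebraMap_iff_lam_le (hC : C.IsHermitian) {r : ℝ} :
    C ≤ algebraMap ℝ _ r ↔ lam C 0 ≤ r :=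
  (le_algebraMap_iff_spectrum_le hC.isSelfAdjoint).trans
    ⟨fun h => h _ hC.isGreatest_spectrum_lam.1,
      fun h _ hx => (hC.isGreatest_spectrum_lam.2 hx).trans h⟩

theorem lam_mono (hD : D.IsHermitian) (h : C ≤ D) : lam C 0 ≤ lam D 0 := by
  have hC : C.IsHermitian := by
    simpa using hD.sub (le_iff.mp h).isHermitian
  rw [← hC.le_algebraMap_iff_lam_le]
  exact h.trans (hD.le_algebraMap_iff_lam_le.mpr le_rfl)

theorem IsHermitian.lam_cfc (hC : C.IsHermitian) {f : ℝ → ℝ} (hf : MonotoneOn f (spectrum ℝ C)) :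
    lam (cfc f C) 0 = f (lam C 0) := by
  have hfC : (cfc f C).IsHermitian := cfc_predicate f C
  have h := hf.map_isGreatest hC.isGreatest_spectrum_lam
  rw [← cfc_map_spectrum f C (hf := finite_real_spectrum.continuousOn f)] at h
  exact hfC.isGreatest_spectrum_lam.unique h

theorem IsHermitian.lam_smul (hC : C.IsHermitian) {c : ℝ} (hc : 0 ≤ c) :
    lam (c • C) 0 = c * lam C 0 := by
  rw [← cfc_const_mul_id c C]
  exact hC.lam_cfc fun x _ y _ hxy => mul_le_mul_of_nonneg_left hxy hc

theorem PosSemidef.lam_mrpow (hC : C.PosSemidef) {q : ℝ} (hq : 0 ≤ q) :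
    lam (mrpow C q) 0 = lam C 0 ^ q := by
  rw [mrpow_eq_cfc hC.isHermitian]
  exact hC.isHermitian.lam_cfc ((Real.monotoneOn_rpow_Ici_of_exponent_nonneg hq).mono
    fun _ hx => spectrum_nonneg_of_nonneg (nonneg_iff_posSemidef.mpr hC) hx)

theorem PosSemidef.lam_nonneg (hC : C.PosSemidef) : 0 ≤ lam C 0 :=
  spectrum_nonneg_of_nonneg (nonneg_iff_posSemidef.mpr hC) hC.isHermitian.isGreatest_spectrum_lam.1

theorem PosSemidef.lam_pos (hC : C.PosSemidef) (hC0 : C ≠ 0) : 0 < lam C 0 := by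
  refine hC.lam_nonneg.lt_of_ne fun h => hC0 (le_antisymm ?_ (nonneg_iff_posSemidef.mpr hC))
  simpa using hC.isHermitian.le_algebraMap_iff_lam_le.mpr h.ge

variable {ι : Type*} [Fintype ι] {P : ι → Matrix (Fin n) (Fin n) ℂ}

theorem smul_lam_le_lam_sum_smul (hP : ∀ i, (P i).PosSemidef) {w : ι → ℝ} (hw : ∀ i, 0 ≤ w i)
    (l : ι) : w l * lam (P l) 0 ≤ lam (∑ i, w i • P i) 0 := by
  have hterm : ∀ i, 0 ≤ w i • P i := fun i => nonneg_iff_posSemidef.mpr ((hP i).smul (hw i))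
  rw [← (hP l).isHermitian.lam_smul (hw l)]
  exact lam_mono (nonneg_iff_posSemidef.mp (Finset.sum_nonneg fun i _ => hterm i)).isHermitian
    (Finset.single_le_sum (fun i _ => hterm i) (Finset.mem_univ l))

theorem lam_sum_smul_le (hP : ∀ i, (P i).PosSemidef) {w : ι → ℝ} {c : ℝ} (hc : 0 ≤ c)
    (hwc : ∀ i, P i = 0 ∨ w i ≤ c) : lam (∑ i, w i • P i) 0 ≤ c * lam (∑ i, P i) 0 := by
  have hsum := posSemidef_sum Finset.univ fun i _ => hP i
  rw [← hsum.isHermitian.lam_smul hc]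
  refine lam_mono (hsum.smul hc).isHermitian ?_
  rw [Finset.smul_sum]
  refine Finset.sum_le_sum fun i _ => ?_
  rcases hwc i with h | h
  · simp [h]
  · exact (hP i).smul_le_smul_of_le h

end LargestEigenvalue

end Matrix

theorem stmt0 {n : ℕ} (A K : Matrix (Fin n) (Fin n) ℂ) (hA : A.PosSemidef)
    (a : Fin n → ℝ) (v : Fin n → (Fin n → ℂ))
    (ha : ∀ i j : Fin n, i ≤ j → a j ≤ a i)
    (hortho : ∀ i j : Fin n, star (v i) ⬝ᵥ v j = if i = j then 1 else 0)
    (hspec : A = ∑ i, (a i : ℂ) • Matrix.vecMulVec (v i) (star (v i)))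
    (hK : K ≠ 0) (l₁ : Fin n)
    (hl₁ : K.mulVec (v l₁) ≠ 0) (hmin : ∀ i : Fin n, i < l₁ → K.mulVec (v i) = 0) :
    Tendsto (fun p : ℝ => lam (mrpow (K * mrpow A p * Kᴴ) p⁻¹) 0) atTop (nhds (a l₁)) := by
  have : NeZero n := ⟨l₁.pos.ne'⟩
  have hv := sum_vecMulVec_star_eq_one hortho
  have hAv := mulVec_eq_smul_of_eq_sum hortho hspec
  have ha0 : ∀ i, 0 ≤ a i := fun i =>
    hA.nonneg_of_mulVec_eq_smul (by simp [hortho]) (hAv i)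
  set P : Fin n → Matrix (Fin n) (Fin n) ℂ := fun i => vecMulVec (K *ᵥ v i) (star (K *ᵥ v i))
  have hP : ∀ i, (P i).PosSemidef := fun i => posSemidef_vecMulVec_self_star _
  have hB : ∀ p, K * mrpow A p * Kᴴ = ∑ i, a i ^ p • P i := fun p => by
    rw [mrpow_eq_cfc hA.isHermitian]
    exact hA.isHermitian.mul_cfc_mul_conjTranspose_eq_sum hv hAv _ K
  have hBpsd : ∀ p : ℝ, (∑ i, a i ^ p • P i).PosSemidef := fun p =>
    posSemidef_sum _ fun i _ => (hP i).smul (Real.rpow_nonneg (ha0 i) p)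
  have hbounds : ∀ p : ℝ, 0 < p → a l₁ ^ p * lam (P l₁) 0 ≤ lam (K * mrpow A p * Kᴴ) 0 ∧
      lam (K * mrpow A p * Kᴴ) 0 ≤ a l₁ ^ p * lam (K * Kᴴ) 0 := fun p hp => by
    rw [hB p, self_mul_conjTranspose_eq_sum hv K]
    refine ⟨smul_lam_le_lam_sum_smul hP (fun i => Real.rpow_nonneg (ha0 i) p) l₁,
      lam_sum_smul_le hP (Real.rpow_nonneg (ha0 l₁) p) fun i => ?_⟩
    rcases lt_or_ge i l₁ with hi | hi
    · exact .inl (by simp [P, hmin i hi])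
    · exact .inr (Real.rpow_le_rpow (ha0 i) (ha l₁ i hi) hp.le)
  refine (tendsto_rpow_inv_of_le_of_le (ha0 l₁) ((hP l₁).lam_pos (vecMulVec_star_ne_zero hl₁))
    ((posSemidef_self_mul_conjTranspose K).lam_pos (self_mul_conjTranspose_eq_zero.not.mpr hK))
    hbounds).congr' ?_
  filter_upwards [eventually_gt_atTop 0] with p hp
  rw [hB p, (hBpsd p).lam_mrpow (inv_nonneg.mpr hp.le)]
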